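/- arXiv:math/0010156 — 3 statements merged into one kernel-verified Lean document; each statement's English description precedes it below -/
import Mathlib

section
/- Let X be a Banach space with a Schauder decomposition (E_n) and associated projections P_n. Suppose each E_n has a finite Schauder decomposition (F_{n,k})_{k=1}^{m_n} with decomposition constants uniformly bounded by some M. Then the interleaved sequence (F_{1,1}, ..., F_{1,m_1}, F_{2,1}, ..., F_{2,m_2}, ...) is a Schauder decomposition of X. -/
/-!
The interleaved partial sum ending at `F_{n,j}` is `Sₙ + Tₙⱼ Pₙ`, where `Sₙ = ∑_{i<n} Pᵢ`
and `Tₙⱼ = ∑_{k<j} Q n k`. The two summands are uniformly bounded, by `D` and `M`.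
Pointwise, `Sₙ x → x`, and `Tₙⱼ Pₙ x → 0` because `‖Tₙⱼ‖ ≤ M` while `Pₙ x`, a difference
of consecutive partial sums of a convergent series, tends to `0`.
-/

open Filter Finset Topology

theorem tendsto_zero_of_tendsto_sum_range {G : Type*} [AddCommGroup G] [TopologicalSpace G]
    [IsTopologicalAddGroup G] {f : ℕ → G} {a : G}
    (h : Tendsto (fun N => ∑ k ∈ range N, f k) atTop (𝓝 a)) : Tendsto f atTop (𝓝 0) := by
  simpa [sum_range_succ] using (h.comp (tendsto_add_atTop_nat 1)).sub h

theorem ContinuousLinearMap.tendsto_apply_zero_of_norm_le {𝕜 E F ι : Type*}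
    [NontriviallyNormedField 𝕜] [SeminormedAddCommGroup E] [NormedSpace 𝕜 E]
    [SeminormedAddCommGroup F] [NormedSpace 𝕜 F] {l : Filter ι} {S : ι → E →L[𝕜] F} {C : ℝ}
    (hS : ∀ i, ‖S i‖ ≤ C) {v : ι → E} (hv : Tendsto v l (𝓝 0)) :
    Tendsto (fun i => S i (v i)) l (𝓝 0) := by
  rw [tendsto_zero_iff_norm_tendsto_zero] at hv ⊢
  refine squeeze_zero (fun _ => norm_nonneg _)
    (fun i => (S i).le_of_opNorm_le (hS i) (v i)) ?_
  simpa using hv.const_mul C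

theorem ContinuousLinearMap.sum_range_comp_of_comp_eq {R M : Type*} [Semiring R]
    [TopologicalSpace M] [AddCommMonoid M] [Module R M] [ContinuousAdd M]
    {Q : ℕ → M →L[R] M} {P : M →L[R] M} {j : ℕ} (hQ : ∀ k < j, (Q k).comp P = Q k) :
    (∑ k ∈ range j, Q k).comp P = ∑ k ∈ range j, Q k := by
  rw [finsetSum_comp]
  exact sum_congr rfl fun k hk => hQ k (mem_range.mp hk)

theorem interleaved_schauder_decomposition_general {X : Type*} [NormedAddCommGroup X]
    [NormedSpace ℝ X]
    (P : ℕ → X →L[ℝ] X) (m : ℕ → ℕ) (Q : ℕ → ℕ → X →L[ℝ] X) (D M : ℝ)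
    -- `(Pₙ)` is a Schauder decomposition of `X`:
    (hconv : ∀ x : X, Tendsto (fun N => ∑ k ∈ Finset.range N, P k x) atTop (nhds x))
    (hD : ∀ N, ‖∑ k ∈ Finset.range N, P k‖ ≤ D)
    -- `(Q n k)_{k < m n}` is a finite Schauder decomposition of `Eₙ = ran Pₙ`:
    (hQsub : ∀ n k, k < m n → ∀ x, Q n k (P n x) = Q n k x ∧ P n (Q n k x) = Q n k x)
    -- uniform bound `M` on the finite decomposition constants:
    (hM : ∀ n j, j ≤ m n → ‖(∑ k ∈ Finset.range j, Q n k).comp (P n)‖ ≤ M) :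
    -- Conclusion: the interleaved partial sums are uniformly bounded and
    -- converge to the identity, i.e. the interleaved family is a Schauder decomposition.
    ∃ M' : ℝ, (∀ n j, j ≤ m n →
        ‖(∑ i ∈ Finset.range n, P i) + ∑ k ∈ Finset.range j, Q n k‖ ≤ M') ∧
      ∀ (x : X) (j : ℕ → ℕ), (∀ n, j n ≤ m n) →
        Tendsto (fun n => (∑ i ∈ Finset.range n, P i) x + ∑ k ∈ Finset.range (j n), Q n k x)
          atTop (nhds x) := by
  have hQP : ∀ n j, j ≤ m n → (∑ k ∈ range j, Q n k).comp (P n) = ∑ k ∈ range j, Q n k :=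
    fun n j hj => ContinuousLinearMap.sum_range_comp_of_comp_eq fun k hk =>
      ContinuousLinearMap.ext fun x => (hQsub n k (hk.trans_le hj) x).1
  have hQnorm : ∀ n j, j ≤ m n → ‖∑ k ∈ range j, Q n k‖ ≤ M :=
    fun n j hj => hQP n j hj ▸ hM n j hj
  refine ⟨D + M, fun n j hj => (norm_add_le _ _).trans (add_le_add (hD n) (hQnorm n j hj)),
    fun x j hj => ?_⟩
  have hPx : Tendsto (fun n => P n x) atTop (𝓝 0) := tendsto_zero_of_tendsto_sum_range (hconv x)
  have hQx : Tendsto (fun n => (∑ k ∈ range (j n), Q n k) (P n x)) atTop (𝓝 0) :=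
    ContinuousLinearMap.tendsto_apply_zero_of_norm_le (fun n => hQnorm n (j n) (hj n)) hPx
  have hQx_eq : ∀ n, (∑ k ∈ range (j n), Q n k) (P n x) = ∑ k ∈ range (j n), Q n k x :=
    fun n => by
      rw [← ContinuousLinearMap.comp_apply, hQP n (j n) (hj n), _root_.sum_apply]
  simp only [hQx_eq] at hQx
  simpa using (hconv x).add hQx

/-- If `(Eₙ, Pₙ)` is a Schauder decomposition of `X` and each `Eₙ` has a
finite Schauder decomposition `(F_{n,k})_{k<mₙ}` (with projections `Q n k`) whose
decomposition constants are uniformly bounded by `M`, then the interleaved sequence of all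
the `F_{n,k}`'s is again a Schauder decomposition of `X`: its partial-sum projections are
uniformly bounded and converge pointwise to the identity. -/
theorem interleaved_schauder_decomposition {X : Type*} [NormedAddCommGroup X]
    [NormedSpace ℝ X] [CompleteSpace X]
    (P : ℕ → X →L[ℝ] X) (m : ℕ → ℕ) (Q : ℕ → ℕ → X →L[ℝ] X) (D M : ℝ)
    (hm : ∀ n, 1 ≤ m n)
    -- `(Pₙ)` is a Schauder decomposition of `X`:
    (hidem : ∀ n x, P n (P n x) = P n x)
    (horth : ∀ j k, j ≠ k → ∀ x, P j (P k x) = 0)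
    (hconv : ∀ x : X, Tendsto (fun N => ∑ k ∈ Finset.range N, P k x) atTop (nhds x))
    (hD : ∀ N, ‖∑ k ∈ Finset.range N, P k‖ ≤ D)
    -- `(Q n k)_{k < m n}` is a finite Schauder decomposition of `Eₙ = ran Pₙ`:
    (hQdec : ∀ n, ∑ k ∈ Finset.range (m n), Q n k = P n)
    (hQsub : ∀ n k, k < m n → ∀ x, Q n k (P n x) = Q n k x ∧ P n (Q n k x) = Q n k x)
    (hQidem : ∀ n k, k < m n → ∀ x, Q n k (Q n k x) = Q n k x)
    (hQorth : ∀ n k l, k ≠ l → ∀ x, Q n k (Q n l x) = 0)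
    -- uniform bound `M` on the finite decomposition constants:
    (hM : ∀ n j, j ≤ m n → ‖(∑ k ∈ Finset.range j, Q n k).comp (P n)‖ ≤ M) :
    -- Conclusion: the interleaved partial sums are uniformly bounded and
    -- converge to the identity, i.e. the interleaved family is a Schauder decomposition.
    ∃ M' : ℝ, (∀ n j, j ≤ m n →
        ‖(∑ i ∈ Finset.range n, P i) + ∑ k ∈ Finset.range j, Q n k‖ ≤ M') ∧
      ∀ (x : X) (j : ℕ → ℕ), (∀ n, j n ≤ m n) →
        Tendsto (fun n => (∑ i ∈ Finset.range n, P i) x + ∑ k ∈ Finset.range (j n), Q n k x)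
          atTop (nhds x) :=
  interleaved_schauder_decomposition_general P m Q D M hconv hD hQsub hM
end

section
/- Let X be a Banach space with a Schauder decomposition (E_n) with projections P_n satisfying C₁ = sup_n ‖P_n‖ < ∞. Suppose there is a constant C such that for every finitely nonzero sequence (x_k) with x_k ∈ E_k, ‖Σ x_k‖ ≤ C (Σ ‖x_k‖²)^{1/2}, and the same upper ℓ₂-estimate holds (with the same C) for the dual decomposition Z_n = P_n*(X*) in X*: for finitely nonzero x_k* ∈ Z_k, ‖Σ x_k*‖ ≤ C (Σ ‖x_k*‖²)^{1/2}. Then the decomposition also satisfies the lower ℓ₂-estimate (Σ ‖x_k‖²)^{1/2} ≤ C·C·C₁ ‖Σ x_k‖ for all finitely nonzero sequences x_k ∈ E_k; hence X is isomorphic to the ℓ₂-sum (Σ ⊕ E_n)_{ℓ₂}. -/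
/-!
For `v : X`, Hahn–Banach gives `ψₖ` with `‖ψₖ‖ ≤ ‖Pₖ v‖` and `ψₖ (Pₖ v) = ‖Pₖ v‖²`. The functionals
`ψₖ ∘ Pₖ` lie in `Zₖ`, have norm at most `C₁ ‖Pₖ v‖`, and their sum takes the value `∑ ‖Pₖ v‖²`
at `v`; the dual upper estimate therefore gives `(∑ ‖Pₖ v‖²)^{1/2} ≤ C C₁ ‖v‖`. For `v = ∑ xₖ` this
is the lower estimate (the upper estimate on a single vector gives `1 ≤ C`). It also makes
`v ↦ (Pₙ v)ₙ` a bounded map into the ℓ₂-sum, injective because `∑ Pₙ v → v`, and surjective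
because the upper estimate makes `∑ fₙ` converge for every `f` in the ℓ₂-sum.
-/

open Filter Finset

section UpperEstimates

variable {X : Type*} [NormedAddCommGroup X] [NormedSpace ℝ X] {P : ℕ → X →L[ℝ] X} {C C₁ : ℝ}

variable (P C) in
def UpperEll2Estimate : Prop :=
  ∀ (N : ℕ) (x : ℕ → X), (∀ k, P k (x k) = x k) →
    ‖∑ k ∈ range N, x k‖ ≤ C * √(∑ k ∈ range N, ‖x k‖ ^ 2)

variable (P C) in
def DualUpperEll2Estimate : Prop :=
  ∀ (N : ℕ) (φ : ℕ → StrongDual ℝ X), (∀ k, ∃ ψ : StrongDual ℝ X, φ k = ψ.comp (P k)) →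
    ‖∑ k ∈ range N, φ k‖ ≤ C * √(∑ k ∈ range N, ‖φ k‖ ^ 2)

theorem exists_strongDual_norm_le_apply_eq_sq (y : X) :
    ∃ ψ : StrongDual ℝ X, ‖ψ‖ ≤ ‖y‖ ∧ ψ y = ‖y‖ ^ 2 := by
  obtain ⟨g, hg, hgy⟩ := exists_dual_vector'' ℝ y
  refine ⟨‖y‖ • g, ?_, by simp [hgy, sq]⟩
  calc ‖‖y‖ • g‖ = ‖y‖ * ‖g‖ := by rw [norm_smul, norm_norm]
    _ ≤ ‖y‖ := mul_le_of_le_one_right (norm_nonneg y) hg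

theorem sqrt_sum_sq_norm_apply_le (hC : 0 ≤ C) (hC₁ : ∀ n, ‖P n‖ ≤ C₁)
    (hdual : DualUpperEll2Estimate P C) (v : X) (N : ℕ) :
    √(∑ k ∈ range N, ‖P k v‖ ^ 2) ≤ C * C₁ * ‖v‖ := by
  choose ψ hψ_norm hψ_apply using fun k => exists_strongDual_norm_le_apply_eq_sq (P k v)
  set S := ∑ k ∈ range N, ‖P k v‖ ^ 2
  have hC₁0 : 0 ≤ C₁ := (norm_nonneg _).trans (hC₁ 0)
  have hφ_norm (k : ℕ) : ‖(ψ k).comp (P k)‖ ≤ C₁ * ‖P k v‖ :=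
    calc ‖(ψ k).comp (P k)‖ ≤ ‖ψ k‖ * ‖P k‖ := (ψ k).opNorm_comp_le _
      _ ≤ ‖P k v‖ * C₁ := mul_le_mul (hψ_norm k) (hC₁ k) (norm_nonneg _) (norm_nonneg _)
      _ = C₁ * ‖P k v‖ := mul_comm _ _
  have hφ_sqrt : √(∑ k ∈ range N, ‖(ψ k).comp (P k)‖ ^ 2) ≤ C₁ * √S := by
    rw [Real.sqrt_le_left (by positivity), mul_pow, Real.sq_sqrt (by positivity), mul_sum]
    exact sum_le_sum fun k _ => by
      rw [← mul_pow]; exact pow_le_pow_left₀ (norm_nonneg _) (hφ_norm k) 2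
  have hS : S ≤ C * C₁ * ‖v‖ * √S :=
    calc S = (∑ k ∈ range N, (ψ k).comp (P k)) v := by simp [S, hψ_apply]
      _ ≤ ‖∑ k ∈ range N, (ψ k).comp (P k)‖ * ‖v‖ :=
        (Real.le_norm_self _).trans (ContinuousLinearMap.le_opNorm _ _)
      _ ≤ C * √(∑ k ∈ range N, ‖(ψ k).comp (P k)‖ ^ 2) * ‖v‖ := by
        gcongr; exact hdual N _ fun k => ⟨ψ k, rfl⟩
      _ ≤ C * (C₁ * √S) * ‖v‖ := by gcongr
      _ = C * C₁ * ‖v‖ * √S := by ring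
  have : 0 ≤ C * C₁ * ‖v‖ := by positivity
  nlinarith [Real.sq_sqrt (show 0 ≤ S by positivity), Real.sqrt_nonneg S]

theorem sum_sq_norm_apply_le (hC : 0 ≤ C) (hC₁ : ∀ n, ‖P n‖ ≤ C₁)
    (hdual : DualUpperEll2Estimate P C) (v : X) (s : Finset ℕ) :
    ∑ k ∈ s, ‖P k v‖ ^ 2 ≤ (C * C₁ * ‖v‖) ^ 2 := by
  obtain ⟨N, hsN⟩ := s.exists_nat_subset_range
  have hC₁0 : 0 ≤ C₁ := (norm_nonneg _).trans (hC₁ 0)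
  calc ∑ k ∈ s, ‖P k v‖ ^ 2 ≤ ∑ k ∈ range N, ‖P k v‖ ^ 2 :=
        sum_le_sum_of_subset_of_nonneg hsN fun k _ _ => sq_nonneg _
    _ ≤ (C * C₁ * ‖v‖) ^ 2 :=
        (Real.sqrt_le_left (by positivity)).1 (sqrt_sum_sq_norm_apply_le hC hC₁ hdual v N)

theorem apply_eq_zero_of_ne (horth : ∀ j k, j ≠ k → ∀ x, P j (P k x) = 0) {j k : ℕ} {y : X}
    (hy : P k y = y) (hjk : j ≠ k) : P j y = 0 := by
  rw [← hy, horth j k hjk]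

theorem apply_sum_of_mem (horth : ∀ j k, j ≠ k → ∀ x, P j (P k x) = 0) {x : ℕ → X}
    (hx : ∀ k, P k (x k) = x k) {s : Finset ℕ} {k : ℕ} (hk : k ∈ s) :
    P k (∑ j ∈ s, x j) = x k := by
  rw [map_sum, sum_eq_single_of_mem k hk fun j _ hjk => apply_eq_zero_of_ne horth (hx j) hjk.symm,
    hx k]

theorem UpperEll2Estimate.norm_sum_le (hupper : UpperEll2Estimate P C) (t : Finset ℕ)
    {x : ℕ → X} (hx : ∀ k ∈ t, P k (x k) = x k) :
    ‖∑ k ∈ t, x k‖ ≤ C * √(∑ k ∈ t, ‖x k‖ ^ 2) := by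
  classical
  obtain ⟨N, htN⟩ := t.exists_nat_subset_range
  have h := hupper N (fun k => if k ∈ t then x k else 0) fun k => by
    split_ifs with hk
    · exact hx k hk
    · exact map_zero _
  simpa [apply_ite, sum_ite_mem, inter_eq_right.2 htN] using h

theorem UpperEll2Estimate.one_le (hupper : UpperEll2Estimate P C) {k : ℕ} {y : X}
    (hy : P k y = y) (hy0 : y ≠ 0) : 1 ≤ C := by
  have h := hupper.norm_sum_le {k} (x := fun _ => y) (by simpa using hy)
  rw [sum_singleton, sum_singleton, Real.sqrt_sq (norm_nonneg y)] at h
  exact one_le_of_le_mul_right₀ (norm_pos_iff.2 hy0) (by simpa using h)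

theorem sqrt_sum_sq_le_of_upper_estimates (hC : 0 ≤ C) (hC₁ : ∀ n, ‖P n‖ ≤ C₁)
    (horth : ∀ j k, j ≠ k → ∀ x, P j (P k x) = 0) (hupper : UpperEll2Estimate P C)
    (hdual : DualUpperEll2Estimate P C) (N : ℕ) {x : ℕ → X} (hx : ∀ k, P k (x k) = x k) :
    √(∑ k ∈ range N, ‖x k‖ ^ 2) ≤ C * C * C₁ * ‖∑ k ∈ range N, x k‖ := by
  have hC₁0 : 0 ≤ C₁ := (norm_nonneg _).trans (hC₁ 0)
  have key := sqrt_sum_sq_norm_apply_le hC hC₁ hdual (∑ j ∈ range N, x j) N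
  rw [sum_congr rfl fun k hk => by rw [apply_sum_of_mem horth hx hk]] at key
  by_cases hzero : ∀ k ∈ range N, x k = 0
  · rw [sum_eq_zero fun k hk => by simp [hzero k hk], Real.sqrt_zero]
    positivity
  obtain ⟨k, -, hk⟩ : ∃ k ∈ range N, x k ≠ 0 := by simpa using hzero
  have hC1 := hupper.one_le (hx k) hk
  calc √(∑ k ∈ range N, ‖x k‖ ^ 2) ≤ C * C₁ * ‖∑ k ∈ range N, x k‖ := key
    _ = 1 * (C * C₁ * ‖∑ k ∈ range N, x k‖) := (one_mul _).symm
    _ ≤ C * (C * C₁ * ‖∑ k ∈ range N, x k‖) := by gcongr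
    _ = C * C * C₁ * ‖∑ k ∈ range N, x k‖ := by ring

theorem UpperEll2Estimate.summable [CompleteSpace X] (hupper : UpperEll2Estimate P C) (hC : 0 < C)
    {f : ℕ → X} (hf : ∀ k, P k (f k) = f k) (hsq : Summable fun k => ‖f k‖ ^ 2) : Summable f := by
  refine summable_iff_vanishing_norm.2 fun ε hε => ?_
  obtain ⟨s, hs⟩ := summable_iff_vanishing_norm.1 hsq ((ε / C) ^ 2) (by positivity)
  refine ⟨s, fun t hts => ?_⟩
  have ht : ∑ k ∈ t, ‖f k‖ ^ 2 < (ε / C) ^ 2 := by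
    simpa [Real.norm_of_nonneg (sum_nonneg fun k _ => sq_nonneg ‖f k‖)] using hs t hts
  calc ‖∑ k ∈ t, f k‖ ≤ C * √(∑ k ∈ t, ‖f k‖ ^ 2) := hupper.norm_sum_le t fun k _ => hf k
    _ < C * (ε / C) := by gcongr; exact (Real.sqrt_lt' (by positivity)).2 ht
    _ = ε := by field_simp

end UpperEstimates

section CoordinateMap

variable {X : Type*} [NormedAddCommGroup X] [NormedSpace ℝ X] {P : ℕ → X →L[ℝ] X} {A : ℝ}
  {hA : 0 ≤ A} {hbound : ∀ x (s : Finset ℕ), ∑ k ∈ s, ‖P k x‖ ^ 2 ≤ (A * ‖x‖) ^ 2}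

variable (P) in
noncomputable def decompositionToLp (A : ℝ) (hA : 0 ≤ A)
    (hbound : ∀ x (s : Finset ℕ), ∑ k ∈ s, ‖P k x‖ ^ 2 ≤ (A * ‖x‖) ^ 2) :
    X →L[ℝ] lp (fun n => LinearMap.range (P n : X →ₗ[ℝ] X)) 2 :=
  LinearMap.mkContinuous
    { toFun x := ⟨fun n => ⟨P n x, LinearMap.mem_range_self _ x⟩,
        memℓp_gen' (C := (A * ‖x‖) ^ 2) fun s => by simpa using hbound x s⟩
      map_add' x y := lp.ext <| funext fun n => Subtype.ext <| map_add _ _ _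
      map_smul' c x := lp.ext <| funext fun n => Subtype.ext <| map_smul _ _ _ }
    A fun x => lp.norm_le_of_forall_sum_le (by norm_num) (by positivity) fun s => by
      simpa using hbound x s

@[simp]
theorem decompositionToLp_apply_coe (x : X) (n : ℕ) :
    (decompositionToLp P A hA hbound x n : X) = P n x :=
  rfl

theorem decompositionToLp_injective
    (hconv : ∀ x : X, Tendsto (fun N => ∑ k ∈ range N, P k x) atTop (nhds x)) :
    Function.Injective (decompositionToLp P A hA hbound) := by
  refine (injective_iff_map_eq_zero _).2 fun x hx => ?_
  have hPx (n : ℕ) : P n x = 0 := by simpa using congrArg (fun f => (f n : X)) hx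
  exact tendsto_nhds_unique (hconv x) (by simp [hPx])

theorem decompositionToLp_surjective [CompleteSpace X] {C : ℝ} (hC : 0 < C)
    (hidem : ∀ n x, P n (P n x) = P n x) (horth : ∀ j k, j ≠ k → ∀ x, P j (P k x) = 0)
    (hupper : UpperEll2Estimate P C) :
    Function.Surjective (decompositionToLp P A hA hbound) := by
  intro f
  have hf (k : ℕ) : P k (f k) = f k := by
    obtain ⟨y, hy⟩ := (f k).2
    rw [← hy]
    exact hidem k y
  have hsq : Summable fun k => ‖(f k : X)‖ ^ 2 := by
    simpa using (lp.memℓp f).summable (p := 2) (by norm_num)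
  refine ⟨∑' k, (f k : X), lp.ext <| funext fun n => Subtype.ext ?_⟩
  rw [decompositionToLp_apply_coe, (P n).map_tsum (hupper.summable hC hf hsq),
    tsum_eq_single n fun k hk => apply_eq_zero_of_ne horth (hf k) hk.symm, hf n]

end CoordinateMap

theorem lower_ell2_estimate_of_upper_estimates_general {X : Type*} [NormedAddCommGroup X]
    [NormedSpace ℝ X] [CompleteSpace X]
    (P : ℕ → X →L[ℝ] X) (C C₁ : ℝ) (hC : 0 < C)
    (hidem : ∀ n x, P n (P n x) = P n x)
    (horth : ∀ j k, j ≠ k → ∀ x, P j (P k x) = 0)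
    (hconv : ∀ x : X, Tendsto (fun N => ∑ k ∈ Finset.range N, P k x) atTop (nhds x))
    (hC₁bound : ∀ n, ‖P n‖ ≤ C₁)
    -- upper ℓ₂-estimate for finitely nonzero sequences `xₖ ∈ Eₖ`:
    (hupper : ∀ (N : ℕ) (x : ℕ → X), (∀ k, P k (x k) = x k) →
      ‖∑ k ∈ Finset.range N, x k‖ ≤ C * Real.sqrt (∑ k ∈ Finset.range N, ‖x k‖ ^ 2))
    -- upper ℓ₂-estimate for the dual decomposition `Zₖ = Pₖ*(X*)`:
    (hdual : ∀ (N : ℕ) (φ : ℕ → X →L[ℝ] ℝ), (∀ k, ∃ ψ : X →L[ℝ] ℝ, φ k = ψ.comp (P k)) →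
      ‖∑ k ∈ Finset.range N, φ k‖ ≤ C * Real.sqrt (∑ k ∈ Finset.range N, ‖φ k‖ ^ 2)) :
    (∀ (N : ℕ) (x : ℕ → X), (∀ k, P k (x k) = x k) →
      Real.sqrt (∑ k ∈ Finset.range N, ‖x k‖ ^ 2) ≤ C * C * C₁ * ‖∑ k ∈ Finset.range N, x k‖)
    ∧ Nonempty (X ≃L[ℝ] lp (fun n => LinearMap.range (P n : X →ₗ[ℝ] X)) 2) := by
  refine ⟨fun N x hx => sqrt_sum_sq_le_of_upper_estimates hC.le hC₁bound horth hupper hdual N hx,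
    ?_⟩
  have hC₁0 : 0 ≤ C₁ := (norm_nonneg _).trans (hC₁bound 0)
  have (n : ℕ) : CompleteSpace (LinearMap.range (P n : X →ₗ[ℝ] X)) :=
    (ContinuousLinearMap.IsIdempotentElem.isClosed_range
      (p := P n) (ContinuousLinearMap.ext (hidem n))).completeSpace_coe
  let T := decompositionToLp P (C * C₁) (by positivity) (sum_sq_norm_apply_le hC.le hC₁bound hdual)
  exact ⟨.ofBijective T (LinearMap.ker_eq_bot.2 (decompositionToLp_injective hconv))
    (LinearMap.range_eq_top.2 (decompositionToLp_surjective hC hidem horth hupper))⟩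

/-- Let `(Eₙ, Pₙ)` be a Schauder decomposition of a Banach space `X` with
`C₁ = sup ‖Pₙ‖ < ∞`, satisfying an upper ℓ₂-estimate with constant `C`, and whose dual
decomposition `Zₙ = Pₙ*(X*)` satisfies the same upper ℓ₂-estimate with constant `C`.
Then the decomposition satisfies the lower ℓ₂-estimate with constant `C·C·C₁`, and hence
`X` is isomorphic to the ℓ₂-sum `(Σ ⊕ Eₙ)_{ℓ₂}`. -/
theorem lower_ell2_estimate_of_upper_estimates {X : Type*} [NormedAddCommGroup X]
    [NormedSpace ℝ X] [CompleteSpace X]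
    (P : ℕ → X →L[ℝ] X) (C C₁ : ℝ) (hC : 0 < C) (hC₁ : 0 < C₁)
    (hidem : ∀ n x, P n (P n x) = P n x)
    (horth : ∀ j k, j ≠ k → ∀ x, P j (P k x) = 0)
    (hconv : ∀ x : X, Tendsto (fun N => ∑ k ∈ Finset.range N, P k x) atTop (nhds x))
    (hC₁bound : ∀ n, ‖P n‖ ≤ C₁)
    -- upper ℓ₂-estimate for finitely nonzero sequences `xₖ ∈ Eₖ`:
    (hupper : ∀ (N : ℕ) (x : ℕ → X), (∀ k, P k (x k) = x k) →
      ‖∑ k ∈ Finset.range N, x k‖ ≤ C * Real.sqrt (∑ k ∈ Finset.range N, ‖x k‖ ^ 2))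
    -- upper ℓ₂-estimate for the dual decomposition `Zₖ = Pₖ*(X*)`:
    (hdual : ∀ (N : ℕ) (φ : ℕ → X →L[ℝ] ℝ), (∀ k, ∃ ψ : X →L[ℝ] ℝ, φ k = ψ.comp (P k)) →
      ‖∑ k ∈ Finset.range N, φ k‖ ≤ C * Real.sqrt (∑ k ∈ Finset.range N, ‖φ k‖ ^ 2)) :
    (∀ (N : ℕ) (x : ℕ → X), (∀ k, P k (x k) = x k) →
      Real.sqrt (∑ k ∈ Finset.range N, ‖x k‖ ^ 2) ≤ C * C * C₁ * ‖∑ k ∈ Finset.range N, x k‖)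
    ∧ Nonempty (X ≃L[ℝ] lp (fun n => LinearMap.range (P n : X →ₗ[ℝ] X)) 2) :=
  lower_ell2_estimate_of_upper_estimates_general P C C₁ hC hidem horth hconv hC₁bound hupper hdual
end

section
/- Let X be a Banach space with Schauder decomposition (F_n), let K ≥ 1, and let (δ_N) be a decreasing sequence of positive reals with ∏_{N=1}^∞ (1+δ_N) ≤ 2. Suppose ||| · ||| is an equivalent norm on X with ‖x‖ ≤ |||x||| ≤ 2‖x‖ such that for every N, every x ∈ F_1 + ... + F_N and every y ∈ closure of Σ_{k=N+2}^∞ F_k, one has |||x+y||| ≤ (1+δ_N)(|||x|||² + 4K²‖y‖²)^{1/2}. Then for every finitely nonzero block basic sequence (x_k)_{k=1}^n with respect to (F_n), ‖Σ_{k=1}^n x_k‖ ≤ 32 K² (Σ_{k=1}^n ‖x_k‖²)^{1/2}. -/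
open Filter Finset

/-! The blocks are split into those of even and of odd index, so that consecutive blocks of
either family are separated by at least one summand of the decomposition. For such a separated
family, adding one block at a time with the hypothesis on `T` gives, by induction,
`T(y₀ + ⋯ + yₘ) ≤ (∏_{i<m} (1 + δᵢ)) · 2K · (∑ ‖yᵢ‖²)^{1/2}`, where the product stays `≤ 2`.
Since `‖·‖ ≤ T`, the two families together give the constant `8K ≤ 32K²`. -/

theorem Finset.sum_range_eq_sum_two_mul_add_sum_two_mul_add_one {M : Type*} [AddCommMonoid M]
    (f : ℕ → M) (n : ℕ) :
    ∑ k ∈ range n, f k =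
      ∑ i ∈ range ((n + 1) / 2), f (2 * i) + ∑ i ∈ range (n / 2), f (2 * i + 1) := by
  induction n with
  | zero => simp
  | succ n ih =>
    obtain ⟨t, rfl | rfl⟩ := Nat.even_or_odd' n
    · rw [sum_range_succ, ih, show (2 * t + 1 + 1) / 2 = t + 1 by omega,
        show (2 * t + 1) / 2 = t by omega, show 2 * t / 2 = t by omega, sum_range_succ]
      abel
    · rw [sum_range_succ, ih, show (2 * t + 1 + 1 + 1) / 2 = t + 1 by omega,
        show (2 * t + 1 + 1) / 2 = t + 1 by omega, show (2 * t + 1) / 2 = t by omega,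
        sum_range_succ (fun i => f (2 * i + 1))]
      abel

theorem sum_range_eq_of_tendsto_of_forall_ge_eq_zero {M : Type*} [AddCommMonoid M]
    [TopologicalSpace M] [T2Space M] {f : ℕ → M} {z : M}
    (hf : Tendsto (fun N => ∑ k ∈ range N, f k) atTop (nhds z)) {n : ℕ}
    (hzero : ∀ k ≥ n, f k = 0) {N : ℕ} (hN : n ≤ N) :
    ∑ k ∈ range N, f k = z := by
  have hconst : ∀ N ≥ n, ∑ k ∈ range N, f k = ∑ k ∈ range n, f k :=
    fun N hN => eventually_constant_sum hzero hN
  rw [hconst N hN]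
  exact tendsto_nhds_unique (tendsto_atTop_of_eventually_const hconst) hf

theorem Real.sqrt_sq_add_le_mul_sqrt_add {t c Q s a : ℝ} (ht : 0 ≤ t) (hc : 0 ≤ c)
    (hQ : 1 ≤ Q) (hs : 0 ≤ s) (ha : 0 ≤ a) (h : t ≤ Q * c * √s) :
    √(t ^ 2 + c ^ 2 * a) ≤ Q * c * √(s + a) := by
  have ht2 : t ^ 2 ≤ (Q * c) ^ 2 * s := by
    calc t ^ 2 ≤ (Q * c * √s) ^ 2 := pow_le_pow_left₀ ht h 2
      _ = (Q * c) ^ 2 * s := by rw [mul_pow _ √s, Real.sq_sqrt hs]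
  rw [Real.sqrt_le_left (by positivity), mul_pow, Real.sq_sqrt (by positivity)]
  nlinarith [mul_nonneg (mul_nonneg (sq_nonneg c) ha) (by nlinarith : (0 : ℝ) ≤ Q ^ 2 - 1)]

section SeparatedBlocks

variable {X : Type*} [NormedAddCommGroup X] [NormedSpace ℝ X] {P : ℕ → X →L[ℝ] X}
  {K : ℝ} {δ : ℕ → ℝ} {T : X → ℝ}

theorem T_sum_range_succ_le_prod_mul_sqrt
    (hconv : ∀ x : X, Tendsto (fun N => ∑ k ∈ range N, P k x) atTop (nhds x))
    (hK : 1 ≤ K) (hδpos : ∀ N, 0 < δ N) (hδdec : Antitone δ)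
    (hT_low : ∀ x, ‖x‖ ≤ T x) (hT_up : ∀ x, T x ≤ 2 * ‖x‖)
    (hmain : ∀ (N : ℕ) (x y : X), (∑ i ∈ range N, P i) x = x →
      (∀ i, i < N + 1 → P i y = 0) →
      T (x + y) ≤ (1 + δ N) * √((T x) ^ 2 + 4 * K ^ 2 * ‖y‖ ^ 2))
    {y : ℕ → X} {b : ℕ → ℕ} (hb : StrictMono b)
    (hend : ∀ i j, b i ≤ j → P j (y i) = 0) (hstart : ∀ i j, j ≤ b i → P j (y (i + 1)) = 0)
    (m : ℕ) :
    T (∑ i ∈ range (m + 1), y i) ≤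
      (∏ i ∈ range m, (1 + δ i)) * (2 * K) * √(∑ i ∈ range (m + 1), ‖y i‖ ^ 2) := by
  induction m with
  | zero =>
    simp only [zero_add, range_one, sum_singleton, range_zero, prod_empty, one_mul,
      Real.sqrt_sq (norm_nonneg _)]
    nlinarith [hT_up (y 0), norm_nonneg (y 0)]
  | succ m ih =>
    set w := ∑ i ∈ range (m + 1), y i
    have hw : (∑ i ∈ range (b m), P i) w = w := by
      rw [_root_.sum_apply]
      refine sum_range_eq_of_tendsto_of_forall_ge_eq_zero (hconv w) (fun j hj => ?_) le_rfl
      rw [map_sum]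
      exact sum_eq_zero fun i hi =>
        hend i j ((hb.monotone (mem_range_succ_iff.mp hi)).trans hj)
    have hstep := hmain (b m) w (y (m + 1)) hw fun j hj => hstart m j (Nat.lt_succ_iff.mp hj)
    have hsqrt : √(T w ^ 2 + 4 * K ^ 2 * ‖y (m + 1)‖ ^ 2) ≤
        (∏ i ∈ range m, (1 + δ i)) * (2 * K) * √(∑ i ∈ range (m + 1 + 1), ‖y i‖ ^ 2) := by
      rw [show 4 * K ^ 2 = (2 * K) ^ 2 by ring, sum_range_succ _ (m + 1)]
      exact Real.sqrt_sq_add_le_mul_sqrt_add ((norm_nonneg w).trans (hT_low w)) (by linarith)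
        (one_le_prod fun i _ => by linarith [hδpos i]) (sum_nonneg fun i _ => sq_nonneg _)
        (sq_nonneg _) ih
    have hδ : 1 + δ (b m) ≤ 1 + δ m := by linarith [hδdec hb.le_apply (a := m)]
    calc T (∑ i ∈ range (m + 1 + 1), y i) = T (w + y (m + 1)) := by rw [sum_range_succ]
      _ ≤ (1 + δ (b m)) * √(T w ^ 2 + 4 * K ^ 2 * ‖y (m + 1)‖ ^ 2) := hstep
      _ ≤ (1 + δ m) * ((∏ i ∈ range m, (1 + δ i)) * (2 * K) *
            √(∑ i ∈ range (m + 1 + 1), ‖y i‖ ^ 2)) :=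
        mul_le_mul hδ hsqrt (Real.sqrt_nonneg _) (by linarith [hδpos m])
      _ = _ := by rw [prod_range_succ]; ring

theorem T_sum_range_le_four_mul_sqrt
    (hconv : ∀ x : X, Tendsto (fun N => ∑ k ∈ range N, P k x) atTop (nhds x))
    (hK : 1 ≤ K) (hδpos : ∀ N, 0 < δ N) (hδdec : Antitone δ)
    (hδprod : ∀ n, ∏ N ∈ range n, (1 + δ N) ≤ 2)
    (hT_low : ∀ x, ‖x‖ ≤ T x) (hT_up : ∀ x, T x ≤ 2 * ‖x‖)
    (hmain : ∀ (N : ℕ) (x y : X), (∑ i ∈ range N, P i) x = x →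
      (∀ i, i < N + 1 → P i y = 0) →
      T (x + y) ≤ (1 + δ N) * √((T x) ^ 2 + 4 * K ^ 2 * ‖y‖ ^ 2))
    {y : ℕ → X} {b : ℕ → ℕ} (hb : StrictMono b)
    (hend : ∀ i j, b i ≤ j → P j (y i) = 0) (hstart : ∀ i j, j ≤ b i → P j (y (i + 1)) = 0) :
    ∀ m, T (∑ i ∈ range m, y i) ≤ 4 * K * √(∑ i ∈ range m, ‖y i‖ ^ 2)
  | 0 => by
    have := hT_up 0
    simp only [range_zero, sum_empty, norm_zero, mul_zero, Real.sqrt_zero] at this ⊢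
    exact this
  | m + 1 =>
    calc T (∑ i ∈ range (m + 1), y i)
        ≤ (∏ i ∈ range m, (1 + δ i)) * (2 * K) * √(∑ i ∈ range (m + 1), ‖y i‖ ^ 2) :=
          T_sum_range_succ_le_prod_mul_sqrt hconv hK hδpos hδdec hT_low hT_up hmain hb hend
            hstart m
      _ ≤ 2 * (2 * K) * √(∑ i ∈ range (m + 1), ‖y i‖ ^ 2) := by
          gcongr
          exact hδprod m
      _ = 4 * K * √(∑ i ∈ range (m + 1), ‖y i‖ ^ 2) := by ring

end SeparatedBlocks

theorem block_upper_two_estimate_general {X : Type*} [NormedAddCommGroup X] [NormedSpace ℝ X]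
    (P : ℕ → X →L[ℝ] X)
    (hconv : ∀ x : X, Tendsto (fun N => ∑ k ∈ Finset.range N, P k x) atTop (nhds x))
    (K : ℝ) (hK : 1 ≤ K)
    (δ : ℕ → ℝ) (hδpos : ∀ N, 0 < δ N) (hδdec : Antitone δ)
    (hδprod : ∀ n, ∏ N ∈ Finset.range n, (1 + δ N) ≤ 2)
    (T : X → ℝ)
    (hT_add : ∀ x y, T (x + y) ≤ T x + T y)
    (hT_low : ∀ x, ‖x‖ ≤ T x) (hT_up : ∀ x, T x ≤ 2 * ‖x‖)
    (hmain : ∀ (N : ℕ) (x y : X), (∑ i ∈ Finset.range N, P i) x = x →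
      (∀ i, i < N + 1 → P i y = 0) →
      T (x + y) ≤ (1 + δ N) * Real.sqrt ((T x) ^ 2 + 4 * K ^ 2 * ‖y‖ ^ 2))
    -- `(x_k)_{k<n}` is a block basic sequence with respect to the decomposition:
    (n : ℕ) (x : ℕ → X) (r : ℕ → ℕ) (hrmono : StrictMono r)
    (hblock : ∀ k j, (j < r k ∨ r (k + 1) ≤ j) → P j (x k) = 0) :
    ‖∑ k ∈ Finset.range n, x k‖ ≤
      32 * K ^ 2 * Real.sqrt (∑ k ∈ Finset.range n, ‖x k‖ ^ 2) := by
  have hparity : ∀ e m, T (∑ i ∈ range m, x (2 * i + e)) ≤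
      4 * K * √(∑ i ∈ range m, ‖x (2 * i + e)‖ ^ 2) := fun e =>
    T_sum_range_le_four_mul_sqrt hconv hK hδpos hδdec hδprod hT_low hT_up hmain
      (b := fun i => r (2 * i + e + 1)) (hrmono.comp fun _ _ h => by omega)
      (fun i j hj => hblock _ j (Or.inr hj))
      (fun i j hj => hblock _ j (Or.inl (hj.trans_lt (hrmono (by omega)))))
  have heven := hparity 0 ((n + 1) / 2)
  have hodd := hparity 1 (n / 2)
  simp only [add_zero] at heven
  set A := ∑ i ∈ range ((n + 1) / 2), ‖x (2 * i)‖ ^ 2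
  set B := ∑ i ∈ range (n / 2), ‖x (2 * i + 1)‖ ^ 2
  have hA : √A ≤ √(A + B) :=
    Real.sqrt_le_sqrt (le_add_of_nonneg_right (sum_nonneg fun _ _ => sq_nonneg _))
  have hB : √B ≤ √(A + B) :=
    Real.sqrt_le_sqrt (le_add_of_nonneg_left (sum_nonneg fun _ _ => sq_nonneg _))
  calc ‖∑ k ∈ range n, x k‖ ≤ T (∑ k ∈ range n, x k) := hT_low _
    _ ≤ T (∑ i ∈ range ((n + 1) / 2), x (2 * i)) + T (∑ i ∈ range (n / 2), x (2 * i + 1)) := by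
      rw [sum_range_eq_sum_two_mul_add_sum_two_mul_add_one x n]
      exact hT_add _ _
    _ ≤ 4 * K * √A + 4 * K * √B := add_le_add heven hodd
    _ ≤ 8 * K * √(A + B) := by nlinarith
    _ ≤ 32 * K ^ 2 * √(A + B) := mul_le_mul_of_nonneg_right (by nlinarith) (Real.sqrt_nonneg _)
    _ = 32 * K ^ 2 * √(∑ k ∈ range n, ‖x k‖ ^ 2) := by
      rw [sum_range_eq_sum_two_mul_add_sum_two_mul_add_one (fun k => ‖x k‖ ^ 2) n]

/-- Let `X` be a Banach space with Schauder decomposition `(Fₙ)` (projections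
`Pₙ`), `K ≥ 1`, and `(δ_N)` a decreasing sequence of positive reals with `∏ (1+δ_N) ≤ 2`.
Suppose `|||·|||` (denoted `T`) is an equivalent norm with `‖x‖ ≤ T x ≤ 2‖x‖` such that for
every `N`, every `x ∈ F₀ + ⋯ + F_{N-1}` and every `y` in the closed span of `(F_k)_{k ≥ N+1}`,
`T(x+y) ≤ (1+δ_N)·(T(x)² + 4K²‖y‖²)^{1/2}`. Then every finitely nonzero block basic sequence
`(x_k)` with respect to `(Fₙ)` satisfies `‖Σ x_k‖ ≤ 32K²(Σ ‖x_k‖²)^{1/2}`. -/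
theorem block_upper_two_estimate {X : Type*} [NormedAddCommGroup X] [NormedSpace ℝ X]
    [CompleteSpace X]
    (P : ℕ → X →L[ℝ] X) (D : ℝ)
    (hidem : ∀ n x, P n (P n x) = P n x)
    (horth : ∀ j k, j ≠ k → ∀ x, P j (P k x) = 0)
    (hconv : ∀ x : X, Tendsto (fun N => ∑ k ∈ Finset.range N, P k x) atTop (nhds x))
    (hD : ∀ N, ‖∑ k ∈ Finset.range N, P k‖ ≤ D)
    (K : ℝ) (hK : 1 ≤ K)
    (δ : ℕ → ℝ) (hδpos : ∀ N, 0 < δ N) (hδdec : Antitone δ)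
    (hδprod : ∀ n, ∏ N ∈ Finset.range n, (1 + δ N) ≤ 2)
    (T : X → ℝ)
    (hT_add : ∀ x y, T (x + y) ≤ T x + T y)
    (hT_smul : ∀ (c : ℝ) (x : X), T (c • x) = |c| * T x)
    (hT_low : ∀ x, ‖x‖ ≤ T x) (hT_up : ∀ x, T x ≤ 2 * ‖x‖)
    (hmain : ∀ (N : ℕ) (x y : X), (∑ i ∈ Finset.range N, P i) x = x →
      (∀ i, i < N + 1 → P i y = 0) →
      T (x + y) ≤ (1 + δ N) * Real.sqrt ((T x) ^ 2 + 4 * K ^ 2 * ‖y‖ ^ 2))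
    -- `(x_k)_{k<n}` is a block basic sequence with respect to the decomposition:
    (n : ℕ) (x : ℕ → X) (r : ℕ → ℕ) (hr0 : r 0 = 0) (hrmono : StrictMono r)
    (hblock : ∀ k j, (j < r k ∨ r (k + 1) ≤ j) → P j (x k) = 0) :
    ‖∑ k ∈ Finset.range n, x k‖ ≤
      32 * K ^ 2 * Real.sqrt (∑ k ∈ Finset.range n, ‖x k‖ ^ 2) :=
  block_upper_two_estimate_general P hconv K hK δ hδpos hδdec hδprod T hT_add hT_low hT_up hmain n x
    r hrmono hblock
end
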